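/- Let M be a matching in a 2-layered bipartite graph such that in the intersection graph H[M] every vertex has degree exactly 2 and H[M] is a cycle (connected 2-regular). Then |M| ≤ 4. -/

import Mathlib

def inter (e f : ℕ × ℕ) : Prop :=
  (e.1 < f.1 ∧ f.2 < e.2) ∨ (f.1 < e.1 ∧ e.2 < f.2)

def IsMatching (M : Set (ℕ × ℕ)) : Prop :=
  ∀ e ∈ M, ∀ f ∈ M, e ≠ f → e.1 ≠ f.1 ∧ e.2 ≠ f.2

def HG (M : Set (ℕ × ℕ)) : SimpleGraph M where
  Adj e f := inter e.1 f.1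
  symm := ⟨by intro a b h; unfold inter at h ⊢; omega⟩
  loopless := ⟨by intro a h; unfold inter at h; omega⟩

/-!
Let `a` be the edge of `M` with the smallest left endpoint and `f` the one with the smallest
right endpoint. Then `a` crosses exactly the edges whose right endpoint lies below that of `a`,
and `f` exactly those whose left endpoint lies below that of `f`; in particular `a` and `f`
cross. Let `y` be the second edge crossing `f` and `z` the second edge crossing `a`. Either
`y = z`, or the endpoints force `y` and `z` to cross. In both cases each of `a, f, y, z` already
has its two neighbours among `a, f, y, z`, so by connectivity `M = {a, f, y, z}`.
-/

theorem Set.exists_eq_pair_of_ncard_eq_two {α : Type*} {s : Set α} {x : α} (hs : s.ncard = 2)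
    (hx : x ∈ s) : ∃ y, x ≠ y ∧ s = {x, y} := by
  obtain ⟨u, v, huv, rfl⟩ := Set.ncard_eq_two.1 hs
  rcases hx with rfl | rfl
  · exact ⟨v, huv, rfl⟩
  · exact ⟨u, huv.symm, Set.pair_comm _ _⟩

theorem Set.subset_of_ncard_eq_two {α : Type*} {s t : Set α} {x y : α} (hs : s.ncard = 2)
    (hxy : x ≠ y) (hx : x ∈ s) (hy : y ∈ s) (hxt : x ∈ t) (hyt : y ∈ t) : s ⊆ t := by
  obtain ⟨y', hxy', rfl⟩ := Set.exists_eq_pair_of_ncard_eq_two hs hx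
  obtain rfl : y = y' := by simpa [hxy.symm] using hy
  exact Set.insert_subset hxt (Set.singleton_subset_iff.2 hyt)

theorem SimpleGraph.Connected.mem_of_forall_adj_mem {V : Type*} {G : SimpleGraph V}
    (hG : G.Connected) {S : Set V} {u : V} (hu : u ∈ S) (hS : ∀ v w, v ∈ S → G.Adj v w → w ∈ S)
    (v : V) : v ∈ S := by
  obtain ⟨p⟩ := hG u v
  induction p with
  | nil => exact hu
  | cons h _ ih => exact ih (hS _ _ hu h)

theorem inter_comm {e f : ℕ × ℕ} : inter e f ↔ inter f e := by
  unfold inter; omega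

theorem ne_of_inter {e f : ℕ × ℕ} (h : inter e f) : e ≠ f := by
  rintro rfl; unfold inter at h; omega

def crossing (M : Set (ℕ × ℕ)) (e : ℕ × ℕ) : Set (ℕ × ℕ) := {f | f ∈ M ∧ inter e f}

theorem subset_of_forall_crossing_subset {M T : Set (ℕ × ℕ)} (hconn : (HG M).Connected)
    {a : ℕ × ℕ} (ha : a ∈ M) (haT : a ∈ T) (hT : ∀ u ∈ T, crossing M u ⊆ T) : M ⊆ T :=
  fun e he => hconn.mem_of_forall_adj_mem (S := {v : M | v.1 ∈ T}) (u := ⟨a, ha⟩) haT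
    (fun v w hv hvw => hT v hv ⟨w.2, hvw⟩) ⟨e, he⟩

section Extremal

variable {M : Set (ℕ × ℕ)} {a f g y z : ℕ × ℕ}

theorem inter_iff_of_forall_fst_le (hM : IsMatching M) (ha : a ∈ M) (haMin : ∀ g ∈ M, a.1 ≤ g.1)
    (hg : g ∈ M) : inter a g ↔ g.2 < a.2 := by
  have := haMin g hg
  rcases eq_or_ne g a with rfl | hne
  · simp [inter]
  have := (hM g hg a ha hne).1
  unfold inter; omega

theorem inter_iff_of_forall_snd_le (hM : IsMatching M) (hf : f ∈ M) (hfMin : ∀ g ∈ M, f.2 ≤ g.2)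
    (hg : g ∈ M) : inter f g ↔ g.1 < f.1 := by
  have := hfMin g hg
  rcases eq_or_ne g f with rfl | hne
  · simp [inter]
  have := (hM g hg f hf hne).2
  unfold inter; omega

variable (hM : IsMatching M) (ha : a ∈ M) (haMin : ∀ g ∈ M, a.1 ≤ g.1) (hf : f ∈ M)
  (hfMin : ∀ g ∈ M, f.2 ≤ g.2)
include hM ha haMin hf hfMin

theorem inter_of_forall_fst_le_of_forall_snd_le (hne : (crossing M a).Nonempty) : inter a f := by
  obtain ⟨g, hg, hag⟩ := hne
  have := (inter_iff_of_forall_fst_le hM ha haMin hg).1 hag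
  have := hfMin g hg
  exact (inter_iff_of_forall_fst_le hM ha haMin hf).2 (by omega)

theorem eq_or_inter_of_crossing_eq_pair (hy : crossing M f = {a, y}) (hz : crossing M a = {f, z}) :
    y = z ∨ inter y z := by
  refine or_iff_not_imp_left.2 fun hyz => ?_
  obtain ⟨hyM, hfy⟩ : y ∈ crossing M f := hy ▸ by simp
  obtain ⟨hzM, haz⟩ : z ∈ crossing M a := hz ▸ by simp
  have hay : ¬ inter a y := fun h => by
    have : y ∈ crossing M a := ⟨hyM, h⟩
    simp [hz, hyz, (ne_of_inter hfy).symm] at this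
  have hfz : ¬ inter f z := fun h => by
    have : z ∈ crossing M f := ⟨hzM, h⟩
    simp [hy, Ne.symm hyz, (ne_of_inter haz).symm] at this
  rw [inter_iff_of_forall_fst_le hM ha haMin hyM] at hay
  rw [inter_iff_of_forall_fst_le hM ha haMin hzM] at haz
  rw [inter_iff_of_forall_snd_le hM hf hfMin hyM] at hfy
  rw [inter_iff_of_forall_snd_le hM hf hfMin hzM] at hfz
  unfold inter; omega

end Extremal

theorem crossing_subset_of_crossing_eq_pair {M : Set (ℕ × ℕ)} {a f y z : ℕ × ℕ}
    (hdeg : ∀ e ∈ M, (crossing M e).ncard = 2) (haf : a ≠ f) (hay : a ≠ y) (hfz : f ≠ z)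
    (hy : crossing M f = {a, y}) (hz : crossing M a = {f, z}) (hyz : y = z ∨ inter y z) :
    ∀ u ∈ ({a, f, y, z} : Set (ℕ × ℕ)), crossing M u ⊆ {a, f, y, z} := by
  obtain ⟨haM, -⟩ : a ∈ crossing M f := hy ▸ by simp
  obtain ⟨hyM, hfy⟩ : y ∈ crossing M f := hy ▸ by simp
  obtain ⟨hfM, -⟩ : f ∈ crossing M a := hz ▸ by simp
  obtain ⟨hzM, haz⟩ : z ∈ crossing M a := hz ▸ by simp
  rintro u (rfl | rfl | rfl | rfl)
  · simp [hz, Set.insert_subset_iff]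
  · simp [hy, Set.insert_subset_iff]
  · rcases hyz with rfl | hyz
    · exact Set.subset_of_ncard_eq_two (hdeg _ hyM) haf
        ⟨haM, inter_comm.1 haz⟩ ⟨hfM, inter_comm.1 hfy⟩ (by simp) (by simp)
    · exact Set.subset_of_ncard_eq_two (hdeg _ hyM) hfz
        ⟨hfM, inter_comm.1 hfy⟩ ⟨hzM, hyz⟩ (by simp) (by simp)
  · rcases hyz with rfl | hyz
    · exact Set.subset_of_ncard_eq_two (hdeg _ hzM) haf
        ⟨haM, inter_comm.1 haz⟩ ⟨hfM, inter_comm.1 hfy⟩ (by simp) (by simp)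
    · exact Set.subset_of_ncard_eq_two (hdeg _ hzM) hay
        ⟨haM, inter_comm.1 haz⟩ ⟨hyM, inter_comm.1 hyz⟩ (by simp) (by simp)

theorem cycle_length_at_most_four (M : Finset (ℕ × ℕ))
    (hM : IsMatching ↑M)
    (hconn : (HG ↑M).Connected)
    (hdeg : ∀ e ∈ M, Set.ncard {f | f ∈ (M : Set (ℕ × ℕ)) ∧ inter e f} = 2) :
    M.card ≤ 4 := by
  have hdeg : ∀ e ∈ (M : Set (ℕ × ℕ)), (crossing M e).ncard = 2 := hdeg
  obtain ⟨⟨e, he⟩⟩ := hconn.nonempty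
  obtain ⟨a, ha, haMin⟩ := M.exists_min_image Prod.fst ⟨e, he⟩
  obtain ⟨f, hf, hfMin⟩ := M.exists_min_image Prod.snd ⟨e, he⟩
  have haf : inter a f := inter_of_forall_fst_le_of_forall_snd_le hM ha haMin hf hfMin
    (Set.nonempty_of_ncard_ne_zero (by simp [hdeg a ha]))
  obtain ⟨y, hay, hy⟩ := Set.exists_eq_pair_of_ncard_eq_two (hdeg f hf) ⟨ha, inter_comm.1 haf⟩
  obtain ⟨z, hfz, hz⟩ := Set.exists_eq_pair_of_ncard_eq_two (hdeg a ha) ⟨hf, haf⟩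
  have hyz := eq_or_inter_of_crossing_eq_pair hM ha haMin hf hfMin hy hz
  have hsub : (M : Set (ℕ × ℕ)) ⊆ ({a, f, y, z} : Finset (ℕ × ℕ)) := by
    push_cast
    exact subset_of_forall_crossing_subset hconn ha (by simp)
      (crossing_subset_of_crossing_eq_pair hdeg (ne_of_inter haf) hay hfz hy hz hyz)
  exact (Finset.card_le_card (Finset.coe_subset.1 hsub)).trans Finset.card_le_four
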